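/- In the semidirect product Γ_p = T^{p-1} ⋊_ρ C_p, every subgroup of the form ⟨t·a⟩ with t ∈ T^{p-1} is conjugate in Γ_p to the subgroup C_p = ⟨a⟩. -/
import Mathlib

lemma circle_exp_pow (x : ℝ) (n : ℕ) : Circle.exp x ^ n = Circle.exp (n * x) := by
  induction n with
  | zero => simp
  | succ k ih => rw [pow_succ, ih, Nat.cast_add, Nat.cast_one, add_mul, one_mul, Circle.exp_add]

lemma circle_root (z : Circle) (n : ℕ) (hn : n ≠ 0) : ∃ r : Circle, r ^ n = z := by
  refine ⟨Circle.exp (Complex.arg z / n), ?_⟩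
  rw [circle_exp_pow, mul_div_cancel₀ _ (by exact_mod_cast hn), Circle.exp_arg]

/-- In the semidirect product `Γ_p = T^{p-1} ⋊_ρ C_p` (the generator `a` of
`C_p = Multiplicative (ZMod p)` acting on `T^{p-1} = Fin (p-1) → Circle` by
`ρ(a)(t_1, …, t_{p-1}) = (t_{p-1}⁻¹, t_1 t_{p-1}⁻¹, …, t_{p-2} t_{p-1}⁻¹)`),
every subgroup of the form `⟨t·a⟩` with `t ∈ T^{p-1}` is conjugate in `Γ_p` to the
subgroup `C_p = ⟨a⟩`. -/
theorem stmt_3 (p : ℕ) (hp : p.Prime)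
    (φ : Multiplicative (ZMod p) →* MulAut (Fin (p - 1) → Circle))
    (hφ : ∀ (t : Fin (p - 1) → Circle) (i : Fin (p - 1)),
      φ (Multiplicative.ofAdd (1 : ZMod p)) t i =
        if (i : ℕ) = 0 then (t ⟨p - 2, by have := i.isLt; omega⟩)⁻¹
        else t ⟨(i : ℕ) - 1, by have := i.isLt; omega⟩ * (t ⟨p - 2, by have := i.isLt; omega⟩)⁻¹)
    (t : Fin (p - 1) → Circle) :
    ∃ g : SemidirectProduct (Fin (p - 1) → Circle) (Multiplicative (ZMod p)) φ,
      Subgroup.zpowers (⟨t, Multiplicative.ofAdd (1 : ZMod p)⟩ :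
          SemidirectProduct (Fin (p - 1) → Circle) (Multiplicative (ZMod p)) φ) =
        Subgroup.map (MulAut.conj g).toMonoidHom
          (Subgroup.zpowers (⟨1, Multiplicative.ofAdd (1 : ZMod p)⟩ :
            SemidirectProduct (Fin (p - 1) → Circle) (Multiplicative (ZMod p)) φ)) := by
  have hp2 : 2 ≤ p := hp.two_le
  have hn : p - 1 ≠ 0 := by omega
  set f : ℕ → Circle := fun j => t ⟨j % (p - 1), Nat.mod_lt _ (Nat.pos_of_ne_zero hn)⟩ with hf
  obtain ⟨r, hr⟩ := circle_root (∏ j ∈ Finset.range (p - 1), f j) p (by omega)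
  set s : Fin (p - 1) → Circle :=
    fun i => (∏ j ∈ Finset.range ((i : ℕ) + 1), f j) * (r⁻¹) ^ ((i : ℕ) + 1) with hs
  have hstop : ∀ h : p - 2 < p - 1, s ⟨p - 2, h⟩ = r := by
    intro h
    have h1 : (p - 2) + 1 = p - 1 := by omega
    have hpe : r ^ p = r ^ (p - 1) * r := by rw [← pow_succ]; congr 1; omega
    show (∏ j ∈ Finset.range ((p - 2) + 1), f j) * r⁻¹ ^ ((p - 2) + 1) = r
    rw [h1, ← hr, hpe, inv_pow]
    group
  have hleft : s * φ (Multiplicative.ofAdd (1 : ZMod p)) s⁻¹ = t := by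
    funext i
    rw [Pi.mul_apply, hφ s⁻¹ i]
    rcases Nat.eq_zero_or_pos (i : ℕ) with h0 | h0
    · have hi0 : i = ⟨0, by omega⟩ := Fin.ext h0
      rw [if_pos h0, Pi.inv_apply, inv_inv, hstop, hi0]
      show (∏ j ∈ Finset.range (0 + 1), f j) * r⁻¹ ^ (0 + 1) * r = t ⟨0, by omega⟩
      rw [Finset.prod_range_one]
      have hf0 : f 0 = t ⟨0, by omega⟩ := by
        simp [hf, Nat.mod_eq_of_lt (show 0 < p - 1 by omega)]
      rw [hf0]
      group
    · have hilt := i.isLt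
      rw [if_neg (by omega), Pi.inv_apply, Pi.inv_apply, inv_inv]
      rw [hstop]
      have e1 : s i = (∏ j ∈ Finset.range ((i : ℕ)), f j) * f (i : ℕ) * r⁻¹ ^ ((i : ℕ) + 1) := by
        rw [hs]; simp only; rw [Finset.prod_range_succ]
      have e2 : s ⟨(i : ℕ) - 1, by omega⟩ =
          (∏ j ∈ Finset.range ((i : ℕ)), f j) * r⁻¹ ^ ((i : ℕ)) := by
        have h2 : ((i : ℕ) - 1) + 1 = (i : ℕ) := by omega
        show (∏ j ∈ Finset.range (((i : ℕ) - 1) + 1), f j) * r⁻¹ ^ (((i : ℕ) - 1) + 1) = _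
        rw [h2]
      have hfi : f (i : ℕ) = t i := by
        simp [hf, Nat.mod_eq_of_lt hilt]
      rw [e1, e2, hfi, pow_succ]
      simp [mul_inv_rev, mul_comm, mul_left_comm, mul_assoc]
  have key : (⟨s, 1⟩ : SemidirectProduct (Fin (p - 1) → Circle) (Multiplicative (ZMod p)) φ) *
      ⟨1, Multiplicative.ofAdd (1 : ZMod p)⟩ *
      (⟨s, 1⟩ : SemidirectProduct (Fin (p - 1) → Circle) (Multiplicative (ZMod p)) φ)⁻¹ =
      ⟨t, Multiplicative.ofAdd (1 : ZMod p)⟩ := by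
    ext1
    · simp only [SemidirectProduct.mul_left, SemidirectProduct.mul_right,
        SemidirectProduct.inv_left, SemidirectProduct.inv_right, map_one, one_mul, mul_one,
        inv_one, MulAut.one_apply]
      exact hleft
    · simp only [SemidirectProduct.mul_right, SemidirectProduct.inv_right, one_mul, mul_one,
        inv_one]
  refine ⟨⟨s, 1⟩, ?_⟩
  rw [MonoidHom.map_zpowers]
  congr 1
  rw [MulEquiv.coe_toMonoidHom, MulAut.conj_apply, key]
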